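/- arXiv:2311.02668 — 5 statements merged into one kernel-verified Lean document; each statement's English description precedes it below -/
import Mathlib

section
/- Let r₁, r₂, r₃, ν₁₂, ν₃ be positive real numbers. Then the 5×5 matrix D with rows (0,0,1,1,0), (1,1,0,0,1), (−r₂, r₂, ν₁₂, −ν₁₂, 0), (r₁, r₁, 0, 0, −r₃), (−ν₁₂, ν₁₂, −r₂, r₂, −ν₃) is invertible. -/
open Matrix

def convergenceAllocationMatrix {R : Type*} [Ring R] (r1 r2 r3 ν12 ν3 : R) :
    Matrix (Fin 5) (Fin 5) R :=
  !![0, 0, 1, 1, 0;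
     1, 1, 0, 0, 1;
     -r2, r2, ν12, -ν12, 0;
     r1, r1, 0, 0, -r3;
     -ν12, ν12, -r2, r2, -ν3]

theorem det_convergenceAllocationMatrix {R : Type*} [CommRing R] (r1 r2 r3 ν12 ν3 : R) :
    (convergenceAllocationMatrix r1 r2 r3 ν12 ν3).det = 4 * (r1 + r3) * (r2 ^ 2 + ν12 ^ 2) := by
  simp [convergenceAllocationMatrix, det_succ_row_zero, Fin.sum_univ_succ, Fin.succAbove]
  ring

theorem stmt9_general (r1 r2 r3 ν12 ν3 : ℝ) (h1 : 0 < r1) (h2 : 0 < r2) (h3 : 0 < r3) :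
    IsUnit (!![0, 0, 1, 1, 0;
               1, 1, 0, 0, 1;
               -r2, r2, ν12, -ν12, 0;
               r1, r1, 0, 0, -r3;
               -ν12, ν12, -r2, r2, -ν3] : Matrix (Fin 5) (Fin 5) ℝ) := by
  change IsUnit (convergenceAllocationMatrix r1 r2 r3 ν12 ν3)
  rw [isUnit_iff_isUnit_det, det_convergenceAllocationMatrix, isUnit_iff_ne_zero]
  positivity

theorem stmt9 (r1 r2 r3 ν12 ν3 : ℝ) (h1 : 0 < r1) (h2 : 0 < r2) (h3 : 0 < r3)
    (h12 : 0 < ν12) (h3' : 0 < ν3) :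
    IsUnit (!![0, 0, 1, 1, 0;
               1, 1, 0, 0, 1;
               -r2, r2, ν12, -ν12, 0;
               r1, r1, 0, 0, -r3;
               -ν12, ν12, -r2, r2, -ν3] : Matrix (Fin 5) (Fin 5) ℝ) :=
  stmt9_general r1 r2 r3 ν12 ν3 h1 h2 h3
end

section
/- Let k > 0 be a constant and let θ̃ : ℝ≥0 → ℝ satisfy d/dt sin²(θ̃(t)/2) = −2k·cos²(θ̃(t)/2)·sin²(θ̃(t)/2). If sin²(θ̃(0)/2) < 1, then sin²(θ̃(t)/2) → 0 as t → ∞; moreover sin²(θ̃(t)/2) ≤ sin²(θ̃(0)/2)·e^{−2k·cos²(θ̃(0)/2)·t} for all t ≥ 0. -/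
/-!
With `y = sin²(θ̃/2) ∈ [0, 1]` the equation reads `y' = -2k (1 - y) y`, so `y` is nonincreasing.
Hence `1 - y t ≥ 1 - y 0 = cos²(θ̃(0)/2)`, which turns the equation into the linear differential
inequality `y' ≤ -2k cos²(θ̃(0)/2) y`; Grönwall's inequality gives the exponential bound, and the
rate is positive exactly when `y 0 < 1`.
-/

open Real Filter Set

theorem le_mul_exp_of_hasDerivAt_le_neg_mul {y y' : ℝ → ℝ} {r a : ℝ}
    (hy : ∀ t ≥ a, HasDerivAt y (y' t) t) (hle : ∀ t ≥ a, y' t ≤ -r * y t) :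
    ∀ t ≥ a, y t ≤ y a * exp (-r * (t - a)) := by
  intro t ht
  have hgronwall := le_gronwallBound_of_liminf_deriv_right_le (K := -r) (ε := 0) (b := t)
    (fun s hs => (hy s hs.1).continuousAt.continuousWithinAt)
    (fun s hs _ hr => (hy s hs.1).hasDerivWithinAt.liminf_right_slope_le hr) le_rfl
    (fun s hs => by simpa using hle s hs.1) t ⟨ht, le_rfl⟩
  rwa [gronwallBound_ε0] at hgronwall

section Logistic

variable {y : ℝ → ℝ} {a : ℝ}

theorem antitoneOn_of_hasDerivAt_logistic (ha : 0 ≤ a) (hy₀ : ∀ t, 0 ≤ y t) (hy₁ : ∀ t, y t ≤ 1)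
    (hode : ∀ t ≥ 0, HasDerivAt y (-a * (1 - y t) * y t) t) : AntitoneOn y (Ici 0) := by
  refine antitoneOn_of_hasDerivWithinAt_nonpos (convex_Ici 0)
    (fun t ht => (hode t ht).continuousAt.continuousWithinAt)
    (fun t ht => (hode t (interior_subset ht)).hasDerivWithinAt) fun t _ => ?_
  have := mul_nonneg (mul_nonneg ha (sub_nonneg.mpr (hy₁ t))) (hy₀ t)
  linarith

theorem le_mul_exp_of_hasDerivAt_logistic (ha : 0 ≤ a) (hy₀ : ∀ t, 0 ≤ y t)
    (hy₁ : ∀ t, y t ≤ 1) (hode : ∀ t ≥ 0, HasDerivAt y (-a * (1 - y t) * y t) t) :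
    ∀ t ≥ 0, y t ≤ y 0 * exp (-(a * (1 - y 0)) * t) := by
  have hanti := antitoneOn_of_hasDerivAt_logistic ha hy₀ hy₁ hode
  have hlinear : ∀ t ≥ 0, -a * (1 - y t) * y t ≤ -(a * (1 - y 0)) * y t := fun t ht => by
    have hyt : y t ≤ y 0 := hanti self_mem_Ici ht ht
    nlinarith [mul_nonneg ha (hy₀ t)]
  simpa using le_mul_exp_of_hasDerivAt_le_neg_mul hode hlinear

end Logistic

theorem tendsto_zero_of_le_mul_exp {y : ℝ → ℝ} {C r : ℝ} (hr : 0 < r) (hy₀ : ∀ t, 0 ≤ y t)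
    (hle : ∀ t ≥ 0, y t ≤ C * exp (-r * t)) : Tendsto y atTop (nhds 0) := by
  have hexp : Tendsto (fun t => C * exp (-r * t)) atTop (nhds 0) := by
    simpa using (tendsto_exp_atBot.comp
      (tendsto_id.const_mul_atTop_of_neg (neg_neg_of_pos hr))).const_mul C
  exact squeeze_zero' (Eventually.of_forall hy₀) ((eventually_ge_atTop 0).mono hle) hexp

theorem stmt10 (k : ℝ) (hk : 0 < k) (θ : ℝ → ℝ)
    (hode : ∀ t ≥ (0:ℝ), HasDerivAt (fun s => Real.sin (θ s / 2) ^ 2)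
      (-2 * k * Real.cos (θ t / 2) ^ 2 * Real.sin (θ t / 2) ^ 2) t)
    (h0 : Real.sin (θ 0 / 2) ^ 2 < 1) :
    Tendsto (fun t => Real.sin (θ t / 2) ^ 2) atTop (nhds 0)
    ∧ ∀ t ≥ (0:ℝ), Real.sin (θ t / 2) ^ 2
        ≤ Real.sin (θ 0 / 2) ^ 2 * Real.exp (-2 * k * Real.cos (θ 0 / 2) ^ 2 * t) := by
  have hlogistic : ∀ t ≥ 0, HasDerivAt (fun s => sin (θ s / 2) ^ 2)
      (-(2 * k) * (1 - sin (θ t / 2) ^ 2) * sin (θ t / 2) ^ 2) t := fun t ht => by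
    convert hode t ht using 1
    rw [cos_sq']
    ring
  have hbound : ∀ t ≥ 0, sin (θ t / 2) ^ 2
      ≤ sin (θ 0 / 2) ^ 2 * exp (-2 * k * cos (θ 0 / 2) ^ 2 * t) := fun t ht => by
    convert le_mul_exp_of_hasDerivAt_logistic (y := fun s => sin (θ s / 2) ^ 2) (by positivity)
      (fun _ => sq_nonneg _) (fun _ => sin_sq_le_one _) hlogistic t ht using 3
    rw [cos_sq']
    ring
  have hrate : 0 < 2 * k * cos (θ 0 / 2) ^ 2 := by
    rw [cos_sq']
    exact mul_pos (by positivity) (sub_pos.mpr h0)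
  refine ⟨tendsto_zero_of_le_mul_exp (C := sin (θ 0 / 2) ^ 2) hrate (fun _ => sq_nonneg _) ?_,
    hbound⟩
  simpa only [neg_mul] using hbound
end

section
/- Let y : ℝ≥0 → ℝ solve ẏ = −2k(1 − y)y with k > 0 and initial condition y(0) = y₀ ∈ [0, 1). Then y(t) ∈ [0, 1) for all t ≥ 0, y is non-increasing, and y(t) ≤ y₀·e^{−2k(1−y₀)t}. -/
/-! Both `y` and `1 - y` solve scalar linear equations, `ẏ = -2k(1 - y) y` and
`(1 - y)˙ = 2k y (1 - y)`, so the integrating factor writes each as its initial value times an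
exponential; hence `0 ≤ y < 1` for all time. Then `ẏ ≤ 0`, so `y ≤ y₀`, which bounds the rate
`-2k(1 - y)` by `-2k(1 - y₀)` and gives the exponential decay. -/

open Real Filter Set

theorem hasDerivWithinAt_integral_Ici_of_continuousOn {a : ℝ → ℝ} (ha : ContinuousOn a (Ici 0))
    {t : ℝ} (ht : 0 ≤ t) :
    HasDerivWithinAt (fun u => ∫ s in (0:ℝ)..u, a s) (a t) (Ici t) t := by
  have hsub : Ioi t ⊆ Ici 0 := fun s hs => ht.trans hs.le
  refine intervalIntegral.integral_hasDerivWithinAt_right (t := Ioi t)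
    (ha.mono ?_).intervalIntegrable
    ((ha.stronglyMeasurableAtFilter_nhdsWithin measurableSet_Ici t).filter_mono
      (nhdsWithin_mono _ hsub)) ((ha t ht).mono hsub)
  rw [uIcc_of_le ht]
  exact Icc_subset_Ici_self

theorem eq_mul_exp_integral_of_hasDerivAt {y a : ℝ → ℝ} (ha : ContinuousOn a (Ici 0))
    (hy : ∀ t ≥ (0:ℝ), HasDerivAt y (a t * y t) t) {t : ℝ} (ht : 0 ≤ t) :
    y t = y 0 * exp (∫ s in (0:ℝ)..t, a s) := by
  set A := fun u => ∫ s in (0:ℝ)..u, a s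
  have hderiv : ∀ s ∈ Ico 0 t, HasDerivWithinAt (fun u => y u * exp (-A u)) 0 (Ici s) s :=
    fun s hs => ((hy s hs.1).hasDerivWithinAt.mul
      (hasDerivWithinAt_integral_Ici_of_continuousOn ha hs.1).neg.exp).congr_deriv (by ring)
  have hcont : ContinuousOn (fun u => y u * exp (-A u)) (Icc 0 t) := by
    have hy' : ContinuousOn y (Icc 0 t) := fun s hs => (hy s hs.1).continuousAt.continuousWithinAt
    have hA : ContinuousOn A (Icc 0 t) := by
      simpa only [uIcc_of_le ht] using intervalIntegral.continuousOn_primitive_interval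
        ((ha.mono Icc_subset_Ici_self).integrableOn_Icc.mono_set (uIcc_of_le ht).subset)
    exact hy'.mul hA.neg.rexp
  have hconst := constant_of_has_deriv_right_zero hcont hderiv t (right_mem_Icc.2 ht)
  simp only [A, intervalIntegral.integral_same, neg_zero, exp_zero, mul_one] at hconst
  rw [← hconst, mul_assoc, ← exp_add, neg_add_cancel, exp_zero, mul_one]

theorem logistic_mem_Ico {k : ℝ} {y : ℝ → ℝ}
    (hode : ∀ t ≥ (0:ℝ), HasDerivAt y (-2 * k * (1 - y t) * y t) t) (hy0 : y 0 ∈ Ico 0 1)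
    {t : ℝ} (ht : 0 ≤ t) : y t ∈ Ico 0 1 := by
  have hcont : ContinuousOn y (Ici 0) := fun s hs => (hode s hs).continuousAt.continuousWithinAt
  have hy_eq := eq_mul_exp_integral_of_hasDerivAt
    (continuousOn_const.mul (continuousOn_const.sub hcont)) hode ht
  have hz_eq := eq_mul_exp_integral_of_hasDerivAt (y := fun t => 1 - y t)
    (a := fun s => 2 * k * y s) (continuousOn_const.mul hcont)
    (fun s hs => ((hode s hs).const_sub 1).congr_deriv (by ring)) ht
  have hy_nonneg : 0 ≤ y t := hy_eq ▸ mul_nonneg hy0.1 (exp_pos _).le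
  have hz_pos : 0 < 1 - y t := hz_eq ▸ mul_pos (sub_pos.2 hy0.2) (exp_pos _)
  exact ⟨hy_nonneg, sub_pos.1 hz_pos⟩

theorem logistic_antitoneOn {k : ℝ} {y : ℝ → ℝ} (hk : 0 ≤ k)
    (hode : ∀ t ≥ (0:ℝ), HasDerivAt y (-2 * k * (1 - y t) * y t) t) (hy0 : y 0 ∈ Ico 0 1) :
    AntitoneOn y (Ici 0) := by
  refine antitoneOn_of_deriv_nonpos (convex_Ici 0)
    (fun t ht => (hode t ht).continuousAt.continuousWithinAt) ?_ ?_ <;> rw [interior_Ici]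
  · exact fun t ht => (hode t ht.le).differentiableAt.differentiableWithinAt
  · intro t ht
    obtain ⟨h0, h1⟩ := logistic_mem_Ico hode hy0 ht.le
    have : 0 ≤ k * (1 - y t) * y t := mul_nonneg (mul_nonneg hk (sub_nonneg.2 h1.le)) h0
    rw [(hode t ht.le).deriv]
    linarith

theorem logistic_le_mul_exp {k : ℝ} {y : ℝ → ℝ} (hk : 0 ≤ k)
    (hode : ∀ t ≥ (0:ℝ), HasDerivAt y (-2 * k * (1 - y t) * y t) t) (hy0 : y 0 ∈ Ico 0 1)
    {t : ℝ} (ht : 0 ≤ t) : y t ≤ y 0 * exp (-2 * k * (1 - y 0) * t) := by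
  have hrate : ContinuousOn (fun s => -2 * k * (1 - y s)) (Ici 0) :=
    continuousOn_const.mul
      (continuousOn_const.sub fun s hs => (hode s hs).continuousAt.continuousWithinAt)
  have hint : ∫ s in (0:ℝ)..t, -2 * k * (1 - y s) ≤ ∫ s in (0:ℝ)..t, -2 * k * (1 - y 0) := by
    refine intervalIntegral.integral_mono_on ht ?_ intervalIntegrable_const fun s hs => ?_
    · exact (hrate.mono (by simp [uIcc_of_le ht, Icc_subset_Ici_self])).intervalIntegrable
    · have : y s ≤ y 0 := logistic_antitoneOn hk hode hy0 self_mem_Ici hs.1 hs.1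
      nlinarith
  rw [intervalIntegral.integral_const, smul_eq_mul, sub_zero] at hint
  rw [eq_mul_exp_integral_of_hasDerivAt hrate hode ht]
  gcongr
  · exact hy0.1
  · linarith

theorem stmt11 (k : ℝ) (hk : 0 < k) (y : ℝ → ℝ) (y0 : ℝ)
    (hode : ∀ t ≥ (0:ℝ), HasDerivAt y (-2 * k * (1 - y t) * y t) t)
    (hy0 : y 0 = y0) (hy0mem : y0 ∈ Set.Ico (0:ℝ) 1) :
    (∀ t ≥ (0:ℝ), y t ∈ Set.Ico (0:ℝ) 1)
    ∧ AntitoneOn y (Set.Ici (0:ℝ))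
    ∧ ∀ t ≥ (0:ℝ), y t ≤ y0 * Real.exp (-2 * k * (1 - y0) * t) := by
  subst hy0
  exact ⟨fun t ht => logistic_mem_Ico hode hy0mem ht, logistic_antitoneOn hk.le hode hy0mem,
    fun t ht => logistic_le_mul_exp hk.le hode hy0mem ht⟩
end

section
/- Let R̃ ∈ SO(3), let k̄, j̄ ∈ ℝ³ be orthonormal unit vectors, and let k_k, k_j > 0. Then k_k·k̄ᵀ(I − R̃R̃)k̄ + k_j·j̄ᵀ(I − R̃R̃)j̄ = 2·vex(P_a(R̃))ᵀ·Q·vex(P_a(R̃)) where Q = k_k·Π_k̄ + k_j·Π_j̄, P_a(R̃) = (R̃ − R̃ᵀ)/2, and vex is the inverse of the map w ↦ w_×. -/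
open Matrix

/-- Antisymmetric part of a square matrix. -/
noncomputable def Pa (H : Matrix (Fin 3) (Fin 3) ℝ) : Matrix (Fin 3) (Fin 3) ℝ :=
  (1/2 : ℝ) • (H - H.transpose)

/-- Inverse of the map sending a vector to its cross-product skew matrix. -/
def vex (S : Matrix (Fin 3) (Fin 3) ℝ) : Fin 3 → ℝ := ![S 2 1, S 0 2, S 1 0]

lemma pervec (Rt : Matrix (Fin 3) (Fin 3) ℝ)
    (hR : Rt.transpose * Rt = 1) (a : Fin 3 → ℝ) (ha : a ⬝ᵥ a = 1) :
    a ⬝ᵥ ((1 - Rt * Rt).mulVec a)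
      = 2 * (vex (Pa Rt) ⬝ᵥ (((1 : Matrix (Fin 3) (Fin 3) ℝ) - vecMulVec a a).mulVec (vex (Pa Rt)))) := by
  have hRR : Rt * Rt.transpose = 1 := mul_eq_one_comm.mp hR
  have e1 : a ⬝ᵥ ((Rt.transpose * Rt).mulVec a) = 1 := by rw [hR, one_mulVec, ha]
  have e2 : a ⬝ᵥ ((Rt * Rt.transpose).mulVec a) = 1 := by rw [hRR, one_mulVec, ha]
  simp only [Pa, vex, mulVec, dotProduct, Matrix.mul_apply, Fin.sum_univ_three,
    Matrix.sub_apply, Matrix.one_apply, Matrix.smul_apply, Matrix.transpose_apply,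
    vecMulVec_apply, Matrix.cons_val_zero, Matrix.cons_val_one, Matrix.head_cons,
    Matrix.cons_val_two, Matrix.tail_cons, smul_eq_mul, Fin.isValue] at e1 e2 ha ⊢
  norm_num [Fin.ext_iff] at e1 e2 ⊢
  linear_combination (-(1:ℝ)/2) * e1 + (-(1:ℝ)/2) * e2 + (1 + (((Rt 2 1 - Rt 1 2)^2 + (Rt 0 2 - Rt 2 0)^2 + (Rt 1 0 - Rt 0 1)^2)/2)) * ha

theorem stmt14 (Rt : Matrix (Fin 3) (Fin 3) ℝ)
    (hR : Rt.transpose * Rt = 1) (hdet : Rt.det = 1)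
    (kb jb : Fin 3 → ℝ) (hk : kb ⬝ᵥ kb = 1) (hj : jb ⬝ᵥ jb = 1) (hjk : kb ⬝ᵥ jb = 0)
    (kk kj : ℝ) (hkk : 0 < kk) (hkj : 0 < kj) :
    kk * (kb ⬝ᵥ ((1 - Rt * Rt).mulVec kb)) + kj * (jb ⬝ᵥ ((1 - Rt * Rt).mulVec jb))
      = 2 * (vex (Pa Rt) ⬝ᵥ
          ((kk • ((1 : Matrix (Fin 3) (Fin 3) ℝ) - vecMulVec kb kb)
            + kj • ((1 : Matrix (Fin 3) (Fin 3) ℝ) - vecMulVec jb jb)).mulVec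
              (vex (Pa Rt)))) := by
  rw [pervec Rt hR kb hk, pervec Rt hR jb hj]
  simp only [mulVec, dotProduct, Matrix.add_apply, Matrix.smul_apply, Matrix.sub_apply,
    Matrix.one_apply, vecMulVec_apply, Fin.sum_univ_three, smul_eq_mul]
  ring
end

section
/- Let k̄ and k be unit vectors in ℝ³ whose dynamics satisfy d/dt(kᵀk̄) = k_k·|k × k̄|² with k_k > 0. Then the quantity 1 − kᵀk̄ satisfies d/dt(1 − kᵀk̄) = −k_k·(1 − (kᵀk̄)²), and if kᵀk̄(0) > −1 then kᵀk̄(t) → 1 as t → ∞. -/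
/-!
By Lagrange's identity the dynamics of `g = kᵀk̄ ∈ [-1, 1]` are the logistic equation
`g' = c (1 - g²)`. Hence `g` is nondecreasing, and while it stays below `1 - ε` its speed is
at least `c ε (1 + g 0) > 0`, so it would leave `[-1, 1]`; thus it passes every level below `1`.
-/

open Matrix Filter Set

lemma crossProduct_dotProduct_self_of_unit {a b : Fin 3 → ℝ} (ha : a ⬝ᵥ a = 1)
    (hb : b ⬝ᵥ b = 1) : a ⨯₃ b ⬝ᵥ a ⨯₃ b = 1 - (a ⬝ᵥ b) ^ 2 := by
  rw [cross_dot_cross, ha, hb, dotProduct_comm b a]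
  ring

lemma dotProduct_sq_le_one_of_unit {a b : Fin 3 → ℝ} (ha : a ⬝ᵥ a = 1) (hb : b ⬝ᵥ b = 1) :
    (a ⬝ᵥ b) ^ 2 ≤ 1 := by
  have hnonneg : 0 ≤ a ⨯₃ b ⬝ᵥ a ⨯₃ b := Finset.sum_nonneg fun i _ => mul_self_nonneg _
  rw [crossProduct_dotProduct_self_of_unit ha hb] at hnonneg
  linarith

lemma monotoneOn_Ici_of_hasDerivAt_nonneg {f f' : ℝ → ℝ} {x₀ : ℝ}
    (hf : ∀ t ≥ x₀, HasDerivAt f (f' t) t) (hf' : ∀ t ≥ x₀, 0 ≤ f' t) :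
    MonotoneOn f (Ici x₀) := by
  refine monotoneOn_of_hasDerivWithinAt_nonneg (f' := f') (convex_Ici x₀)
    (fun t ht => (hf t ht).continuousAt.continuousWithinAt) (fun t ht => ?_) (fun t ht => ?_)
  · exact (hf t (interior_subset ht)).hasDerivWithinAt
  · exact hf' t (interior_subset ht)

section Logistic

variable {c : ℝ} {g : ℝ → ℝ}

lemma monotoneOn_of_hasDerivAt_mul_one_sub_sq (hc : 0 ≤ c)
    (hg : ∀ t ≥ 0, HasDerivAt g (c * (1 - g t ^ 2)) t) (hbound : ∀ t ≥ 0, g t ^ 2 ≤ 1) :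
    MonotoneOn g (Ici 0) :=
  monotoneOn_Ici_of_hasDerivAt_nonneg hg fun t ht =>
    mul_nonneg hc (sub_nonneg.2 (hbound t ht))

lemma exists_gt_one_sub_of_hasDerivAt_mul_one_sub_sq (hc : 0 < c)
    (hg : ∀ t ≥ 0, HasDerivAt g (c * (1 - g t ^ 2)) t) (hbound : ∀ t ≥ 0, g t ^ 2 ≤ 1)
    (h0 : -1 < g 0) {ε : ℝ} (hε : 0 < ε) : ∃ T ≥ 0, 1 - ε < g T := by
  by_contra! hbelow
  have hmono := monotoneOn_of_hasDerivAt_mul_one_sub_sq hc.le hg hbound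
  set a := c * (ε * (1 + g 0))
  have ha : 0 < a := mul_pos hc (mul_pos hε (by linarith))
  have hspeed : ∀ t ≥ 0, 0 ≤ c * (1 - g t ^ 2) - a := fun t ht => by
    have hgap : ε ≤ 1 - g t := by linarith [hbelow t ht]
    have hrise : 1 + g 0 ≤ 1 + g t := by linarith [hmono self_mem_Ici ht ht]
    have : ε * (1 + g 0) ≤ (1 - g t) * (1 + g t) :=
      mul_le_mul hgap hrise (by linarith) (by linarith)
    nlinarith
  have hlinear : MonotoneOn (fun t => g t - a * t) (Ici 0) :=
    monotoneOn_Ici_of_hasDerivAt_nonneg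
      (fun t ht => (hg t ht).sub ((hasDerivAt_id t).const_mul a) |>.congr_deriv (by simp))
      hspeed
  have hT : (0 : ℝ) ≤ 3 / a := by positivity
  have := hlinear self_mem_Ici hT hT
  simp only [mul_zero, sub_zero, mul_div_cancel₀ _ ha.ne'] at this
  nlinarith [hbound 0 le_rfl, hbound _ hT]

theorem tendsto_one_of_hasDerivAt_mul_one_sub_sq (hc : 0 < c)
    (hg : ∀ t ≥ 0, HasDerivAt g (c * (1 - g t ^ 2)) t) (hbound : ∀ t ≥ 0, g t ^ 2 ≤ 1)
    (h0 : -1 < g 0) : Tendsto g atTop (nhds 1) := by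
  have hmono := monotoneOn_of_hasDerivAt_mul_one_sub_sq hc.le hg hbound
  refine tendsto_order.2 ⟨fun b hb => ?_, fun b hb => ?_⟩
  · obtain ⟨T, hT, hgT⟩ :=
      exists_gt_one_sub_of_hasDerivAt_mul_one_sub_sq hc hg hbound h0 (sub_pos.2 hb)
    filter_upwards [eventually_ge_atTop T] with t ht
    linarith [hmono hT (hT.trans ht) ht]
  · filter_upwards [eventually_ge_atTop 0] with t ht
    nlinarith [hbound t ht]

end Logistic

theorem stmt16 (kk : ℝ) (hkk : 0 < kk) (k kb : ℝ → Fin 3 → ℝ)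
    (hk : ∀ t, k t ⬝ᵥ k t = 1) (hkb : ∀ t, kb t ⬝ᵥ kb t = 1)
    (hode : ∀ t ≥ (0:ℝ), HasDerivAt (fun s => k s ⬝ᵥ kb s)
      (kk * (crossProduct (k t) (kb t) ⬝ᵥ crossProduct (k t) (kb t))) t) :
    (∀ t ≥ (0:ℝ), HasDerivAt (fun s => 1 - k s ⬝ᵥ kb s)
        (-(kk * (1 - (k t ⬝ᵥ kb t) ^ 2))) t)
    ∧ (k 0 ⬝ᵥ kb 0 > -1 →
        Tendsto (fun t => k t ⬝ᵥ kb t) atTop (nhds 1)) := by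
  have hlogistic : ∀ t ≥ (0:ℝ), HasDerivAt (fun s => k s ⬝ᵥ kb s)
      (kk * (1 - (k t ⬝ᵥ kb t) ^ 2)) t := fun t ht => by
    simpa only [crossProduct_dotProduct_self_of_unit (hk t) (hkb t)] using hode t ht
  refine ⟨fun t ht => (hlogistic t ht).const_sub 1, fun h0 => ?_⟩
  exact tendsto_one_of_hasDerivAt_mul_one_sub_sq hkk hlogistic
    (fun t _ => dotProduct_sq_le_one_of_unit (hk t) (hkb t)) h0
end
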